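/- Let h, k be integers with h, k ≥ 2 and gcd(k, h) = gcd(k, h-1) = gcd(k, 2h-1) = 1. Then the hexagon P = conv{(-hk, 1-h), ((1-h)k, -h), ((2h-1)k, -h), ((2h-1)k, 1-h), ((1-h)k, 2h-1), (-hk, 2h-1)} is a Fano polygon: the origin lies in its strict interior and all six vertices are primitive. Moreover, if k ≥ 2, P admits no GL₂(ℤ)-automorphism of order 3 and is not centrally symmetric, hence P is not symmetric. -/

import Mathlib

abbrev Z2 := ℤ × ℤ
abbrev Q2 := ℚ × ℚ

/-- The canonical embedding of lattice points into `ℚ × ℚ`. -/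
def toQ (v : Z2) : Q2 := ((v.1 : ℚ), (v.2 : ℚ))

/-- Pairing of a dual lattice vector with a rational point. -/
def dotQ (u : Z2) (x : Q2) : ℚ := (u.1 : ℚ) * x.1 + (u.2 : ℚ) * x.2

/-- A lattice vector is primitive if its coordinates are coprime. -/
def IsPrimitive (v : Z2) : Prop := Int.gcd v.1 v.2 = 1

/-- Action of an integer matrix on `ℚ × ℚ`. -/
def applyM (G : Matrix (Fin 2) (Fin 2) ℤ) (x : Q2) : Q2 :=
  ((G 0 0 : ℚ) * x.1 + (G 0 1 : ℚ) * x.2, (G 1 0 : ℚ) * x.1 + (G 1 1 : ℚ) * x.2)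

/-- Action of an integer matrix on `ℤ × ℤ`. -/
def applyZ (G : Matrix (Fin 2) (Fin 2) ℤ) (v : Z2) : Z2 :=
  (G 0 0 * v.1 + G 0 1 * v.2, G 1 0 * v.1 + G 1 1 * v.2)

/-- The convex hull in `ℚ²` of a finite set of lattice points. -/
def hull (V : Finset Z2) : Set Q2 := convexHull ℚ (toQ '' (V : Set Z2))

/-- `V` is the vertex set of a Fano polygon: the origin is in the strict interior of the
convex hull, every vertex is primitive, and the points of `V` are exactly the vertices
(extreme points) of the hull. -/
def IsFanoPolygon (V : Finset Z2) : Prop :=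
  (0 : Q2) ∈ interior (hull V) ∧
  (∀ v ∈ V, IsPrimitive v) ∧
  toQ '' (V : Set Z2) = Set.extremePoints ℚ (hull V)

/-- `E` is the edge of `P` with primitive inner normal `u` and height `h`:
`u ≥ -h` holds on `P`, with equality exactly on `E`, and `E` has more than one point. -/
def IsEdge (P E : Set Q2) (u : Z2) (h : ℤ) : Prop :=
  IsPrimitive u ∧ 0 < h ∧
  (∀ x ∈ P, -(h : ℚ) ≤ dotQ u x) ∧
  E = {x ∈ P | dotQ u x = -(h : ℚ)} ∧
  ∃ a b, a ∈ E ∧ b ∈ E ∧ a ≠ b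

/-- The lattice length of an edge: the number of lattice points on it minus one. -/
noncomputable def latticeLength (E : Set Q2) : ℕ :=
  Set.ncard {v : Z2 | toQ v ∈ E} - 1

/-- An edge is long if its lattice length is at least its height. -/
def IsLongEdge (P E : Set Q2) (u : Z2) (h : ℤ) : Prop :=
  IsEdge P E u h ∧ h ≤ (latticeLength E : ℤ)

/-- `P` has a non-empty basket of R-singularities: some edge has lattice length
not a multiple of its height. -/
def HasRsing (P : Set Q2) : Prop :=
  ∃ E u h, IsEdge P E u h ∧ ¬ (h ∣ (latticeLength E : ℤ))

/-- Central symmetry: `P = -P`. -/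
def CentSym (P : Set Q2) : Prop := ∀ x, x ∈ P ↔ -x ∈ P

/-- `G` is a lattice automorphism of `P`. -/
def IsAut (G : Matrix (Fin 2) (Fin 2) ℤ) (P : Set Q2) : Prop :=
  IsUnit G.det ∧ applyM G '' P = P

/-- `P` admits a lattice automorphism of order 3. -/
def ThreeSym (P : Set Q2) : Prop := ∃ G, IsAut G P ∧ G ^ 3 = 1 ∧ G ≠ 1

/-- `P` is symmetric: the fixed-point set of its automorphism group is `{0}`. -/
def SymmetricPolygon (P : Set Q2) : Prop :=
  {x : Q2 | ∀ G, IsAut G P → applyM G x = x} = {0}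

/-- The vertex set of the hexagon `P_{h,k}`. -/
def hexV (h k : ℤ) : Finset Z2 :=
  {(-(h * k), 1 - h), ((1 - h) * k, -h), ((2 * h - 1) * k, -h),
   ((2 * h - 1) * k, 1 - h), ((1 - h) * k, 2 * h - 1), (-(h * k), 2 * h - 1)}

/- ### Auxiliary lemmas -/

lemma convex_half' (a b c : ℚ) : Convex ℚ {x : Q2 | c ≤ a * x.1 + b * x.2} := by
  intro x hx y hy s t hs ht hst
  simp only [Set.mem_setOf_eq] at *
  have h1 : (s • x + t • y).1 = s * x.1 + t * y.1 := rfl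
  have h2 : (s • x + t • y).2 = s * x.2 + t * y.2 := rfl
  rw [h1, h2]
  have e1 := mul_le_mul_of_nonneg_left hx hs
  have e2 := mul_le_mul_of_nonneg_left hy ht
  have e3 : (s + t) * c = c := by rw [hst, one_mul]
  nlinarith [e1, e2, e3]

lemma mem_hull_of_mem' {V : Finset Z2} {v : Z2} (hv : v ∈ V) : toQ v ∈ hull V :=
  subset_convexHull ℚ _ ⟨v, hv, rfl⟩

lemma hull_half' (V : Finset Z2) (a b c : ℚ)
    (H : ∀ v ∈ V, c ≤ a * (v.1 : ℚ) + b * (v.2 : ℚ)) :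
    ∀ x ∈ hull V, c ≤ a * x.1 + b * x.2 := by
  intro x hx
  refine convexHull_min ?_ (convex_half' a b c) hx
  rintro _ ⟨v, hv, rfl⟩
  exact H v hv

lemma hex_vertex_cases' {h k : ℤ} {v : Z2} (hv : v ∈ hexV h k) :
    v = (-(h * k), 1 - h) ∨ v = ((1 - h) * k, -h) ∨ v = ((2 * h - 1) * k, -h) ∨
    v = ((2 * h - 1) * k, 1 - h) ∨ v = ((1 - h) * k, 2 * h - 1) ∨ v = (-(h * k), 2 * h - 1) := by
  simpa [hexV] using hv

lemma hex_bounds' {h k : ℤ} (hh : 2 ≤ h) (hk : 2 ≤ k) :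
    ∀ x ∈ hull (hexV h k),
      -(h : ℚ) ≤ x.2 ∧ x.2 ≤ 2 * (h : ℚ) - 1 ∧ -((h : ℚ) * k) ≤ x.1 ∧
      x.1 + (k : ℚ) * x.2 ≤ (h : ℚ) * k := by
  have hH : (2 : ℚ) ≤ (h : ℚ) := by exact_mod_cast hh
  have hK : (2 : ℚ) ≤ (k : ℚ) := by exact_mod_cast hk
  intro x hx
  have B1 := hull_half' (hexV h k) 0 1 (-(h : ℚ)) ?_ x hx
  have B2 := hull_half' (hexV h k) 0 (-1) (1 - 2 * (h : ℚ)) ?_ x hx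
  have B3 := hull_half' (hexV h k) 1 0 (-((h : ℚ) * k)) ?_ x hx
  have B4 := hull_half' (hexV h k) (-1) (-(k : ℚ)) (-((h : ℚ) * k)) ?_ x hx
  · exact ⟨by linarith, by linarith, by linarith, by nlinarith⟩
  all_goals
    intro v hv
    rcases hex_vertex_cases' hv with rfl | rfl | rfl | rfl | rfl | rfl <;>
      (simp only [] ; push_cast ; nlinarith)

set_option maxHeartbeats 800000 in
lemma box_sub' {h k : ℤ} (hh : 2 ≤ h) (hk : 2 ≤ k) :
    Set.Ioo (-1 : ℚ) 1 ×ˢ Set.Ioo (-1 : ℚ) 1 ⊆ hull (hexV h k) := by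
  have hH : (2 : ℚ) ≤ (h : ℚ) := by exact_mod_cast hh
  have hK : (2 : ℚ) ≤ (k : ℚ) := by exact_mod_cast hk
  rintro ⟨x, y⟩ ⟨⟨hx1, hx2⟩, hy1, hy2⟩
  dsimp only at hx1 hx2 hy1 hy2
  set wC : ℚ := (x + (h:ℚ) * k) * (3 * h - 2) - (y + h - 1) * k with hwC
  set wE : ℚ := (3 * (h:ℚ) - 1) * k * (y + h - 1) + (x + h * k) with hwE
  set Δ : ℚ := 3 * (k:ℚ) * (3 * h ^ 2 - 3 * h + 1) with hΔ
  set wA : ℚ := Δ - wC - wE with hwA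
  have a1 : (0:ℚ) ≤ (x + 1) * (3 * h - 2) := by apply mul_nonneg <;> linarith
  have a2 : (0:ℚ) ≤ (1 - y) * k := by apply mul_nonneg <;> linarith
  have a3 : (0:ℚ) ≤ ((k:ℚ) - 2) * ((h:ℚ) * (h - 1)) := by
    apply mul_nonneg; · linarith
    apply mul_nonneg <;> linarith
  have a4 : (0:ℚ) ≤ ((h:ℚ) - 2) * h := by apply mul_nonneg <;> linarith
  have hwC0 : 0 ≤ wC := by
    have : wC = (x + 1) * (3 * h - 2) + (1 - y) * k + 3 * (((k:ℚ) - 2) * ((h:ℚ) * (h - 1)))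
        + 6 * (((h:ℚ) - 2) * h) + 3 * h + 2 := by rw [hwC]; ring
    rw [this]; linarith
  have b1 : (0:ℚ) ≤ (3 * (h:ℚ) - 1) * k * (y + 1) := by
    apply mul_nonneg; apply mul_nonneg <;> linarith
    linarith
  have b2 : (0:ℚ) ≤ (3 * (h:ℚ) - 1) * k * ((h:ℚ) - 2) := by
    apply mul_nonneg; apply mul_nonneg <;> linarith
    linarith
  have m1 : (4:ℚ) ≤ (h:ℚ) * k := by nlinarith
  have hwE0 : 0 ≤ wE := by
    have : wE = (3 * (h:ℚ) - 1) * k * (y + 1) + (3 * (h:ℚ) - 1) * k * ((h:ℚ) - 2)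
        + x + (h:ℚ) * k := by rw [hwE]; ring
    rw [this]; linarith
  have c1 : (0:ℚ) ≤ (1 - x) * (3 * (h:ℚ) - 1) := by apply mul_nonneg <;> linarith
  have c2 : (0:ℚ) ≤ (1 - y) * ((3 * (h:ℚ) - 2) * k) := by
    apply mul_nonneg; · linarith
    apply mul_nonneg <;> linarith
  have c3 : (0:ℚ) ≤ ((k:ℚ) - 2) * ((h:ℚ) - 1) ^ 2 := by
    apply mul_nonneg; · linarith
    exact sq_nonneg _
  have c4 : (0:ℚ) ≤ ((h:ℚ) - 2) * ((h:ℚ) - 1) := by apply mul_nonneg <;> linarith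
  have hwA0 : 0 ≤ wA := by
    have : wA = (1 - x) * (3 * (h:ℚ) - 1) + (1 - y) * ((3 * (h:ℚ) - 2) * k)
        + 3 * (((k:ℚ) - 2) * ((h:ℚ) - 1) ^ 2) + 6 * (((h:ℚ) - 2) * ((h:ℚ) - 1))
        + 3 * h - 5 := by rw [hwA, hΔ, hwC, hwE]; ring
    rw [this]; linarith
  have hΔ0 : 0 < Δ := by
    have : Δ = 3 * ((k:ℚ) - 2) * ((3:ℚ) * h ^ 2 - 3 * h + 1)
        + 18 * (((h:ℚ) - 2) * ((h:ℚ) - 1)) + 36 * (h:ℚ) - 30 := by rw [hΔ]; ring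
    have q1 : (0:ℚ) ≤ 3 * ((k:ℚ) - 2) * ((3:ℚ) * h ^ 2 - 3 * h + 1) := by
      apply mul_nonneg; · linarith
      nlinarith [c4]
    rw [this]; linarith
  set w : Fin 3 → ℚ := ![wA, wC, wE] with hw
  set z : Fin 3 → Q2 := ![toQ (-(h * k), 1 - h), toQ ((2 * h - 1) * k, -h),
    toQ ((1 - h) * k, 2 * h - 1)] with hz
  have hw0 : w 0 = wA := rfl
  have hw1 : w 1 = wC := rfl
  have hw2 : w 2 = wE := rfl
  have hsum : ∑ i, w i = Δ := by
    rw [Fin.sum_univ_three, hw0, hw1, hw2, hwA]; ring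
  have hmem : Finset.univ.centerMass w z ∈ convexHull ℚ (toQ '' ((hexV h k : Finset Z2) : Set Z2)) := by
    refine Finset.centerMass_mem_convexHull _ ?_ ?_ ?_
    · intro i _
      fin_cases i
      · exact hwA0
      · exact hwC0
      · exact hwE0
    · rw [hsum]; exact hΔ0
    · intro i _
      fin_cases i <;> exact Set.mem_image_of_mem toQ (by simp [hexV])
  have hz0 : z 0 = toQ (-(h * k), 1 - h) := rfl
  have hz1 : z 1 = toQ ((2 * h - 1) * k, -h) := rfl
  have hz2 : z 2 = toQ ((1 - h) * k, 2 * h - 1) := rfl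
  have hcm : Finset.univ.centerMass w z = ((x, y) : Q2) := by
    rw [Finset.centerMass, hsum, Fin.sum_univ_three, hw0, hw1, hw2, hz0, hz1, hz2]
    have hs : wA • toQ (-(h * k), 1 - h) + wC • toQ ((2 * h - 1) * k, -h)
        + wE • toQ ((1 - h) * k, 2 * h - 1) = ((Δ * x, Δ * y) : Q2) := by
      show ((wA * _ + wC * _ + wE * _ , wA * _ + wC * _ + wE * _) : Q2) = _
      rw [Prod.mk.injEq]
      simp only [toQ]
      constructor
      · simp only [hwA, hwC, hwE, hΔ]; push_cast; ring
      · simp only [hwA, hwC, hwE, hΔ]; push_cast; ring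
    rw [hs]
    show ((Δ⁻¹ * (Δ * x), Δ⁻¹ * (Δ * y)) : Q2) = _
    rw [inv_mul_cancel_left₀ (ne_of_gt hΔ0), inv_mul_cancel_left₀ (ne_of_gt hΔ0)]
  rw [← hcm]
  exact hmem

lemma aut_class' {h k : ℤ} (hh : 2 ≤ h) (hk : 2 ≤ k)
    (G : Matrix (Fin 2) (Fin 2) ℤ) (hG : IsAut G (hull (hexV h k))) :
    G 1 0 = 0 ∧ G 1 1 = 1 ∧
      ((G 0 0 = 1 ∧ G 0 1 = 0) ∨ (G 0 0 = -1 ∧ G 0 1 = -k)) := by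
  have hH : (2 : ℚ) ≤ (h : ℚ) := by exact_mod_cast hh
  have hK : (2 : ℚ) ≤ (k : ℚ) := by exact_mod_cast hk
  obtain ⟨hdet, himg⟩ := hG
  have himg' : ∀ v ∈ hexV h k, applyM G (toQ v) ∈ hull (hexV h k) := fun v hv =>
    himg ▸ Set.mem_image_of_mem _ (mem_hull_of_mem' hv)
  have hA := hex_bounds' hh hk _ (himg' (-(h * k), 1 - h) (by simp [hexV]))
  have hD := hex_bounds' hh hk _ (himg' ((2 * h - 1) * k, 1 - h) (by simp [hexV]))
  have hE := hex_bounds' hh hk _ (himg' ((1 - h) * k, 2 * h - 1) (by simp [hexV]))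
  have hF := hex_bounds' hh hk _ (himg' (-(h * k), 2 * h - 1) (by simp [hexV]))
  simp only [applyM, toQ] at hA hD hE hF
  push_cast at hA hD hE hF
  rw [Matrix.det_fin_two] at hdet
  set a : ℤ := G 0 0 with ha'
  set b : ℤ := G 0 1 with hb'
  set c : ℤ := G 1 0 with hc'
  set d : ℤ := G 1 1 with hd'
  clear_value a b c d
  clear himg himg'
  obtain ⟨hA1, hA2, hA3, hA4⟩ := hA
  obtain ⟨hD1, hD2, hD3, hD4⟩ := hD
  obtain ⟨hE1, hE2, hE3, hE4⟩ := hE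
  obtain ⟨hF1, hF2, hF3, hF4⟩ := hF
  -- c = 0
  have hpos : (0:ℚ) ≤ (3 * (h:ℚ) - 1) * k := by
    apply mul_nonneg <;> linarith
  have hw2 : (0:ℚ) ≤ (3 * (h:ℚ) - 1) * ((k:ℚ) - 2) := by
    apply mul_nonneg <;> linarith
  have hc0 : c = 0 := by
    rcases lt_trichotomy c 0 with hc | hc | hc
    · have hcle : (c : ℚ) ≤ -1 := by exact_mod_cast (by omega : c ≤ -1)
      have key : (1:ℚ) - 3 * h ≤ (c:ℚ) * ((3 * h - 1) * k) := by linarith [hD1, hA2]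
      have hmm := mul_le_mul_of_nonneg_right hcle hpos
      linarith [key, hmm, hw2]
    · exact hc
    · have hcge : (1 : ℚ) ≤ (c : ℚ) := by exact_mod_cast (by omega : 1 ≤ c)
      have key : (c:ℚ) * ((3 * h - 1) * k) ≤ 3 * h - 1 := by linarith [hA1, hD2]
      have hmm := mul_le_mul_of_nonneg_right hcge hpos
      linarith [key, hmm, hw2]
  rw [hc0] at hdet
  have hdet' : IsUnit (a * d) := by simpa using hdet
  have hcq : (c : ℚ) = 0 := by exact_mod_cast hc0
  rw [hcq] at hE1 hE2 hF1 hF2 hE4 hF4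
  have hAD : a * d = 1 ∨ a * d = -1 := Int.isUnit_iff.mp hdet'
  -- d = 1
  have hd1 : d = 1 := by
    rcases hAD with hu | hu
    · rcases Int.mul_eq_one_iff_eq_one_or_neg_one.mp hu with ⟨_, hd⟩ | ⟨_, hd⟩
      · exact hd
      · exfalso
        have : (d : ℚ) = -1 := by exact_mod_cast hd
        rw [this] at hE1
        linarith [hE1]
    · have hu' : a * (-d) = 1 := by rw [mul_neg, hu]; norm_num
      rcases Int.mul_eq_one_iff_eq_one_or_neg_one.mp hu' with ⟨_, hd⟩ | ⟨_, hd⟩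
      · exfalso
        have hdd : d = -1 := by omega
        have : (d : ℚ) = -1 := by exact_mod_cast hdd
        rw [this] at hE1
        linarith [hE1]
      · omega
  have hdq : (d : ℚ) = 1 := by exact_mod_cast hd1
  rw [hdq] at hE4 hF4
  have haa : a = 1 ∨ a = -1 := by rw [hd1, mul_one] at hAD; exact hAD
  refine ⟨hc0, hd1, ?_⟩
  rcases haa with haq | haq
  · left
    refine ⟨haq, ?_⟩
    have haqq : (a : ℚ) = 1 := by exact_mod_cast haq
    rw [haqq] at hF3 hE4
    have h1 : (0 : ℚ) ≤ (b : ℚ) * (2 * h - 1) := by linarith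
    have h2 : (b : ℚ) * (2 * h - 1) ≤ 0 := by linarith
    have hb0 : b = 0 := by
      rcases lt_trichotomy b 0 with hb | hb | hb
      · have hble : (b : ℚ) ≤ -1 := by exact_mod_cast (by omega : b ≤ -1)
        have hmm := mul_le_mul_of_nonneg_right hble (by linarith : (0:ℚ) ≤ 2 * (h:ℚ) - 1)
        linarith [h1, hmm]
      · exact hb
      · have hbge : (1 : ℚ) ≤ (b : ℚ) := by exact_mod_cast (by omega : 1 ≤ b)
        have hmm := mul_le_mul_of_nonneg_right hbge (by linarith : (0:ℚ) ≤ 2 * (h:ℚ) - 1)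
        linarith [h2, hmm]
    exact hb0
  · right
    refine ⟨haq, ?_⟩
    have haqq : (a : ℚ) = -1 := by exact_mod_cast haq
    rw [haqq] at hE3 hF4
    have h1 : (0 : ℚ) ≤ ((b : ℚ) + k) * (2 * h - 1) := by linarith [hE3]
    have h2 : ((b : ℚ) + k) * (2 * h - 1) ≤ 0 := by linarith [hF4]
    have hb0 : b = -k := by
      rcases lt_trichotomy (b + k) 0 with hb | hb | hb
      · have hble : ((b : ℚ) + k) ≤ -1 := by exact_mod_cast (by omega : b + k ≤ -1)
        have hmm := mul_le_mul_of_nonneg_right hble (by linarith : (0:ℚ) ≤ 2 * (h:ℚ) - 1)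
        linarith [h1, hmm]
      · omega
      · have hbge : (1 : ℚ) ≤ ((b : ℚ) + k) := by exact_mod_cast (by omega : 1 ≤ b + k)
        have hmm := mul_le_mul_of_nonneg_right hbge (by linarith : (0:ℚ) ≤ 2 * (h:ℚ) - 1)
        linarith [h2, hmm]
    exact hb0

/-- For `h, k ≥ 2` with `k` coprime to `h`, `h-1` and `2h-1`, the hexagon `P_{h,k}` is a
Fano polygon which admits no automorphism of order 3, is not centrally symmetric, and
hence is not symmetric. -/
theorem stmt_17 (h k : ℤ) (hh : 2 ≤ h) (hk : 2 ≤ k)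
    (hc1 : Int.gcd k h = 1) (hc2 : Int.gcd k (h - 1) = 1)
    (hc3 : Int.gcd k (2 * h - 1) = 1) :
    (0 : Q2) ∈ interior (hull (hexV h k)) ∧
    (∀ v ∈ hexV h k, IsPrimitive v) ∧
    ¬ ThreeSym (hull (hexV h k)) ∧
    ¬ CentSym (hull (hexV h k)) ∧
    ¬ SymmetricPolygon (hull (hexV h k)) := by
  have hH : (2 : ℚ) ≤ (h : ℚ) := by exact_mod_cast hh
  have hK : (2 : ℚ) ≤ (k : ℚ) := by exact_mod_cast hk
  refine ⟨?_, ?_, ?_, ?_, ?_⟩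
  · -- origin in interior
    rw [mem_interior]
    refine ⟨Set.Ioo (-1 : ℚ) 1 ×ˢ Set.Ioo (-1 : ℚ) 1, box_sub' hh hk,
      isOpen_Ioo.prod isOpen_Ioo, ?_⟩
    constructor <;> norm_num
  · -- primitivity
    have ck_h : IsCoprime k h := Int.isCoprime_iff_gcd_eq_one.mpr hc1
    have ck_h1 : IsCoprime k (h - 1) := Int.isCoprime_iff_gcd_eq_one.mpr hc2
    have ck_2h : IsCoprime k (2 * h - 1) := Int.isCoprime_iff_gcd_eq_one.mpr hc3
    have c_h_h1 : IsCoprime h (h - 1) := ⟨1, -1, by ring⟩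
    have c_1h_h : IsCoprime (1 - h) h := ⟨1, 1, by ring⟩
    have c_2h_h : IsCoprime (2 * h - 1) h := ⟨-1, 2, by ring⟩
    have c_2h_h1 : IsCoprime (2 * h - 1) (h - 1) := ⟨1, -2, by ring⟩
    have c_1h_2h : IsCoprime (1 - h) (2 * h - 1) := ⟨2, 1, by ring⟩
    have c_h_2h : IsCoprime h (2 * h - 1) := ⟨2, -1, by ring⟩
    intro v hv
    rcases hex_vertex_cases' hv with rfl | rfl | rfl | rfl | rfl | rfl <;>
      rw [IsPrimitive, ← Int.isCoprime_iff_gcd_eq_one]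
    · have h1 : IsCoprime (h * k) (h - 1) := c_h_h1.mul_left ck_h1
      have h2 : IsCoprime (-(h * k)) (-(h - 1)) := h1.neg_left.neg_right
      simpa [show -(h - 1) = 1 - h by ring] using h2
    · exact (c_1h_h.mul_left ck_h).neg_right
    · exact (c_2h_h.mul_left ck_h).neg_right
    · have h1 : IsCoprime ((2 * h - 1) * k) (-(h - 1)) := (c_2h_h1.mul_left ck_h1).neg_right
      simpa [show -(h - 1) = 1 - h by ring] using h1
    · exact c_1h_2h.mul_left ck_2h
    · exact (c_h_2h.mul_left ck_2h).neg_left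
  · -- no order-3 automorphism
    rintro ⟨G, hGaut, hG3, hG1⟩
    obtain ⟨hc, hd, hcase⟩ := aut_class' hh hk G hGaut
    rcases hcase with ⟨ha, hb⟩ | ⟨ha, hb⟩
    · apply hG1
      ext i j
      fin_cases i <;> fin_cases j <;>
        simp [Matrix.one_apply, ha, hb, hc, hd]
    · have hGG : G * G = 1 := by
        ext i j
        fin_cases i <;> fin_cases j <;>
          simp [Matrix.mul_apply, Fin.sum_univ_two, Matrix.one_apply, ha, hb, hc, hd]
      rw [pow_succ, pow_succ, pow_one, hGG, one_mul] at hG3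
      exact hG1 hG3
  · -- not centrally symmetric
    intro hcs
    have hC : toQ ((2 * h - 1) * k, -h) ∈ hull (hexV h k) :=
      mem_hull_of_mem' (by simp [hexV])
    have hneg := (hcs _).mp hC
    have hb := (hex_bounds' hh hk _ hneg).2.2.1
    have : (-(toQ ((2 * h - 1) * k, -h))).1 = -(((2 * h - 1) * k : ℤ) : ℚ) := rfl
    rw [this] at hb
    push_cast at hb
    nlinarith [hb, hH, hK]
  · -- not symmetric
    intro hs
    have hmem : ((-(k : ℚ) / 2, (1 : ℚ)) : Q2) ∈
        {x : Q2 | ∀ G, IsAut G (hull (hexV h k)) → applyM G x = x} := by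
      intro G hG
      obtain ⟨hc, hd, hcase⟩ := aut_class' hh hk G hG
      rcases hcase with ⟨ha, hb⟩ | ⟨ha, hb⟩ <;>
      · rw [applyM, ha, hb, hc, hd, Prod.mk.injEq]
        constructor <;> push_cast <;> ring
    rw [SymmetricPolygon] at hs
    rw [hs] at hmem
    have : ((1 : ℚ)) = 0 := congrArg Prod.snd hmem
    norm_num at this
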